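/- arXiv:2510.05342 — 2 statements merged into one kernel-verified Lean document; each statement's English description precedes it below -/
import Mathlib

section
/- Fix h⋆ ∈ ℝ with |h⋆| < τ and let κ = c(|h⋆|). The per-sample expected MADPO objective F(t) = -(σ(κ·h⋆)·log σ(t) + σ(-κ·h⋆)·log σ(-t)) attains its unique global minimum over t ∈ ℝ at t = κ·h⋆. (Interpreting t = β·h_θ as the implicit reward margin, the optimal policy on a low-margin pair satisfies β·h_{θ⋆} = c(|h_{φ⋆}|)·h_{φ⋆}.) -/
/-- The logistic sigmoid function. -/
noncomputable def sigma (x : ℝ) : ℝ := 1 / (1 + Real.exp (-x))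

/-- The coefficient function of MADPO. -/
noncomputable def coef (τ lam cmax cmin : ℝ) (h : ℝ) : ℝ :=
  cmin + (cmax - cmin) / (1 + ((cmax - 1) / (1 - cmin)) * Real.exp (lam * (h - τ)))

private lemma one_add_exp_pos (x : ℝ) : 0 < 1 + Real.exp x := by positivity

private lemma hasDerivAt_softplus (x : ℝ) :
    HasDerivAt (fun y => Real.log (1 + Real.exp y)) (Real.exp x / (1 + Real.exp x)) x := by
  have h1 : HasDerivAt (fun y : ℝ => 1 + Real.exp y) (Real.exp x) x :=
    (Real.hasDerivAt_exp x).const_add 1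
  exact h1.log (one_add_exp_pos x).ne'

private lemma strictConvex_softplus :
    StrictConvexOn ℝ Set.univ (fun y : ℝ => Real.log (1 + Real.exp y)) := by
  apply StrictMono.strictConvexOn_univ_of_deriv
  · exact (continuous_const.add Real.continuous_exp).log fun x => (one_add_exp_pos x).ne'
  · have hd : deriv (fun y : ℝ => Real.log (1 + Real.exp y)) =
        fun x => Real.exp x / (1 + Real.exp x) := by
      funext x; exact (hasDerivAt_softplus x).deriv
    rw [hd]
    intro a b hab
    rw [div_lt_div_iff₀ (one_add_exp_pos a) (one_add_exp_pos b)]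
    have := Real.exp_lt_exp.2 hab
    nlinarith [Real.exp_pos a, Real.exp_pos b]

private lemma sigma_eq (x : ℝ) : sigma x = Real.exp x / (1 + Real.exp x) := by
  unfold sigma
  rw [Real.exp_neg]
  have h := (Real.exp_pos x).ne'
  field_simp
  ring

private lemma log_sigma (t : ℝ) :
    Real.log (sigma t) = t - Real.log (1 + Real.exp t) := by
  rw [sigma_eq, Real.log_div (Real.exp_pos t).ne' (one_add_exp_pos t).ne', Real.log_exp]

/-- key: softplus tangent line. -/
private lemma softplus_tangent (a t : ℝ) (hne : t ≠ a) :
    Real.log (1 + Real.exp a) + sigma a * (t - a) < Real.log (1 + Real.exp t) := by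
  set f : ℝ → ℝ := fun y => Real.log (1 + Real.exp y)
  have hda := hasDerivAt_softplus a
  rw [sigma_eq]
  rcases lt_or_gt_of_ne hne with h | h
  · have hsl := strictConvex_softplus.slope_lt_of_hasDerivAt (Set.mem_univ t) (Set.mem_univ a) h hda
    rw [slope_def_field, div_lt_iff₀ (by linarith : (0:ℝ) < a - t)] at hsl
    have he : Real.exp a / (1 + Real.exp a) * (a - t)
        = -(Real.exp a / (1 + Real.exp a) * (t - a)) := by ring
    rw [he] at hsl
    linarith
  · have hsl := strictConvex_softplus.lt_slope_of_hasDerivAt (Set.mem_univ a) (Set.mem_univ t) h hda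
    rw [slope_def_field, lt_div_iff₀ (by linarith : (0:ℝ) < t - a)] at hsl
    linarith

private lemma sigma_add_sigma_neg (x : ℝ) : sigma x + sigma (-x) = 1 := by
  rw [sigma_eq, sigma_eq, Real.exp_neg]
  have h := (Real.exp_pos x).ne'
  field_simp
  ring

/-- On a low-margin pair `|h⋆| < τ`, with `κ = c(|h⋆|)`, the per-sample expected MADPO
objective `F t = -(σ(κ·h⋆)·log σ(t) + σ(-κ·h⋆)·log σ(-t))` attains its unique global
minimum at `t = κ·h⋆`. -/
theorem madpo_low_margin_unique_minimizer
    (τ lam cmax cmin : ℝ) (hτ : 0 < τ) (hlam : 0 < lam)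
    (hcmax : 1 < cmax) (hcmin₀ : 0 ≤ cmin) (hcmin₁ : cmin < 1)
    (hstar : ℝ) (hlow : |hstar| < τ)
    (κ : ℝ) (hκ : κ = coef τ lam cmax cmin |hstar|)
    (F : ℝ → ℝ)
    (hF : ∀ t, F t = -(sigma (κ * hstar) * Real.log (sigma t) +
      sigma (-(κ * hstar)) * Real.log (sigma (-t)))) :
    ∀ t : ℝ, t ≠ κ * hstar → F (κ * hstar) < F t := by
  intro t hne
  set a := κ * hstar
  -- rewrite F t as log(1+e^t) - sigma a * t
  have key : ∀ s : ℝ, F s = Real.log (1 + Real.exp s) - sigma a * s := by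
    intro s
    rw [hF s, log_sigma s, log_sigma (-s)]
    have h1 : sigma a + sigma (-a) = 1 := sigma_add_sigma_neg a
    have h3 : Real.log (1 + Real.exp (-s)) = Real.log (1 + Real.exp s) - s := by
      rw [Real.exp_neg]
      have h := (Real.exp_pos s).ne'
      rw [show (1 : ℝ) + (Real.exp s)⁻¹ = (1 + Real.exp s) / Real.exp s by field_simp; ring,
        Real.log_div (one_add_exp_pos s).ne' h, Real.log_exp]
    have h4 : sigma (-a) = 1 - sigma a := by linarith
    rw [h3, h4]
    ring
  rw [key t, key a]
  have := softplus_tangent a t hne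
  nlinarith
end

section
/- The margin-adaptive weight w is uniformly bounded above and below by positive constants: there exist real numbers 0 < w_min ≤ w_max such that w_min ≤ w(h) ≤ w_max for every h ∈ ℝ. -/
/-- The margin-adaptive weight of MADPO. -/
noncomputable def madw (τ lam cmax cmin : ℝ) (h : ℝ) : ℝ :=
  if h > -τ then sigma (coef τ lam cmax cmin |h| * h) / sigma h else 1

lemma sigma_pos (x : ℝ) : 0 < sigma x := by unfold sigma; positivity

lemma sigma_le_one (x : ℝ) : sigma x ≤ 1 := by
  unfold sigma
  rw [div_le_one (by positivity)]
  linarith [Real.exp_pos (-x)]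

lemma sigma_mono {x y : ℝ} (h : x ≤ y) : sigma x ≤ sigma y := by
  unfold sigma
  gcongr

lemma one_le_one_div_sigma (x : ℝ) : (1:ℝ) ≤ 1 / sigma x := by
  rw [le_div_iff₀ (sigma_pos x)]
  simpa using sigma_le_one x

lemma coef_nonneg (τ lam cmax cmin : ℝ) (hcmax : 1 < cmax) (hcmin₀ : 0 ≤ cmin)
    (hcmin₁ : cmin < 1) (h : ℝ) : 0 ≤ coef τ lam cmax cmin h := by
  unfold coef
  have hK : 0 < (cmax - 1) / (1 - cmin) := by
    apply div_pos <;> linarith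
  have hE := Real.exp_pos (lam * (h - τ))
  have : 0 ≤ (cmax - cmin) / (1 + (cmax - 1) / (1 - cmin) * Real.exp (lam * (h - τ))) := by
    apply div_nonneg (by linarith)
    nlinarith
  linarith

lemma coef_le (τ lam cmax cmin : ℝ) (hcmax : 1 < cmax) (hcmin₀ : 0 ≤ cmin)
    (hcmin₁ : cmin < 1) (h : ℝ) : coef τ lam cmax cmin h ≤ cmax := by
  unfold coef
  have hK : 0 < (cmax - 1) / (1 - cmin) := by
    apply div_pos <;> linarith
  have hE := Real.exp_pos (lam * (h - τ))
  have hd : (1:ℝ) ≤ 1 + (cmax - 1) / (1 - cmin) * Real.exp (lam * (h - τ)) := by nlinarith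
  have : (cmax - cmin) / (1 + (cmax - 1) / (1 - cmin) * Real.exp (lam * (h - τ)))
      ≤ cmax - cmin := by
    rw [div_le_iff₀ (by linarith)]
    nlinarith
  linarith

/-- The margin-adaptive weight `w` is uniformly bounded above and below by positive
constants: `0 < w_min ≤ w_max` with `w_min ≤ w(h) ≤ w_max` for every `h ∈ ℝ`. -/
theorem madw_uniformly_bounded
    (τ lam cmax cmin : ℝ) (hτ : 0 < τ) (hlam : 0 < lam)
    (hcmax : 1 < cmax) (hcmin₀ : 0 ≤ cmin) (hcmin₁ : cmin < 1) :
    ∃ wmin wmax : ℝ, 0 < wmin ∧ wmin ≤ wmax ∧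
      ∀ h : ℝ, wmin ≤ madw τ lam cmax cmin h ∧ madw τ lam cmax cmin h ≤ wmax := by
  refine ⟨sigma (-(cmax * τ)), 1 / sigma (-τ), sigma_pos _, ?_, ?_⟩
  · have h1 : sigma (-(cmax * τ)) ≤ 1 := sigma_le_one _
    have h2 := one_le_one_div_sigma (-τ)
    linarith
  · intro h
    unfold madw
    by_cases hcase : h > -τ
    · rw [if_pos hcase]
      set c := coef τ lam cmax cmin |h| with hc
      have hc0 : 0 ≤ c := coef_nonneg τ lam cmax cmin hcmax hcmin₀ hcmin₁ _
      have hc1 : c ≤ cmax := coef_le τ lam cmax cmin hcmax hcmin₀ hcmin₁ _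
      have hch : -(cmax * τ) ≤ c * h := by
        rcases le_or_gt 0 h with hh | hh
        · nlinarith
        · nlinarith
      have hσh := sigma_pos h
      have hσh1 := sigma_le_one h
      have hσch := sigma_pos (c * h)
      constructor
      · have h1 : sigma (-(cmax * τ)) ≤ sigma (c * h) := sigma_mono hch
        have h2 : sigma (c * h) ≤ sigma (c * h) / sigma h := by
          rw [le_div_iff₀ hσh]; nlinarith
        linarith
      · have h1 : sigma (-τ) ≤ sigma h := sigma_mono hcase.le
        have h2 := sigma_pos (-τ)
        rw [div_le_div_iff₀ hσh h2]
        nlinarith [sigma_le_one (c * h)]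
    · rw [if_neg hcase]
      constructor
      · exact sigma_le_one _
      · exact one_le_one_div_sigma (-τ)
end
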